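/- arXiv:2102.11884 — 4 statements merged into one kernel-verified Lean document; each statement's English description precedes it below -/
import Mathlib

section
/- Let $K \in \mathbb{N}_0$, $m \in \mathbb{R}$ with $m > 1$, let $u > 0$ be fixed, and let $u < v_1 \le v_2$. Define $F(u,v) = \frac{(v-u)^{m-1}}{(m-1)\,u\,v^{m-1}}$. Then $\int_{v_1}^{v_2} (v-u)^{m-2}\,\partial_v^K\!\left(v^{-m}\right)dv = \left(\partial_u + \partial_v\right)^K F(u,v)\big|_{v=v_2} - \left(\partial_u + \partial_v\right)^K F(u,v)\big|_{v=v_1}$, where $(\partial_u+\partial_v)^K$ denotes the $K$-th iterated application of the vector field $T = \partial_u + \partial_v$ acting on functions of $(u,v)$. -/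
/-!
On the sector `0 < u < v` the function `F` is a `∂_v`-primitive of `(v - u)^(m-2) v^(-m)`.
Applying `T^K` to `L F = (v - u)^(m-2) v^(-m)` gives the integrand `(v - u)^(m-2) L^K v^(-m)`
on the right, because `T` annihilates `v - u` and acts as `L` on functions of `v` alone, and
`L (T^K F)` on the left, because `T` and `L` are constant-coefficient vector fields and so commute
on smooth functions (symmetry of second derivatives). The fundamental theorem of calculus in `v`
finishes the proof.
-/

open MeasureTheory

/-- The vector field `L = ∂_v` acting on functions of `(u, v)`. -/
noncomputable def Lvf : (ℝ → ℝ → ℝ) → ℝ → ℝ → ℝ := fun F u v => deriv (F u) v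

/-- The vector field `T = ∂_u + ∂_v` acting on functions of `(u, v)`. -/
noncomputable def Tvf : (ℝ → ℝ → ℝ) → ℝ → ℝ → ℝ := fun F u v =>
  deriv (fun s => F s v) u + deriv (F u) v

open Function Set Filter Topology
open scoped ContDiff

theorem fderiv_fderiv_apply_comm {E F : Type*} [NormedAddCommGroup E] [NormedSpace ℝ E]
    [NormedAddCommGroup F] [NormedSpace ℝ F] {f : E → F} {x : E} (hf : ContDiffAt ℝ 2 f x)
    (w₁ w₂ : E) :
    fderiv ℝ (fun y => fderiv ℝ f y w₁) x w₂ = fderiv ℝ (fun y => fderiv ℝ f y w₂) x w₁ := by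
  have hdiff : DifferentiableAt ℝ (fderiv ℝ f) x :=
    (hf.fderiv_right (m := 1) le_rfl).differentiableAt one_ne_zero
  rw [fderiv_clm_apply hdiff (differentiableAt_const w₁),
    fderiv_clm_apply hdiff (differentiableAt_const w₂)]
  simpa using hf.isSymmSndFDerivAt (by simp) w₂ w₁

theorem ContDiffOn.fderiv_apply_of_isOpen {E F : Type*} [NormedAddCommGroup E]
    [NormedSpace ℝ E] [NormedAddCommGroup F] [NormedSpace ℝ F] {f : E → F} {s : Set E}
    (hf : ContDiffOn ℝ ∞ f s) (hs : IsOpen s) (w : E) :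
    ContDiffOn ℝ ∞ (fun y => fderiv ℝ f y w) s :=
  (hf.fderiv_of_isOpen hs le_rfl).clm_apply contDiffOn_const

section VectorFields

variable {G G₁ G₂ : ℝ → ℝ → ℝ} {U : Set (ℝ × ℝ)} {u v : ℝ}

theorem hasDerivAt_partial_left (hG : DifferentiableAt ℝ (uncurry G) (u, v)) :
    HasDerivAt (fun s => G s v) (fderiv ℝ (uncurry G) (u, v) (1, 0)) u :=
  hG.hasFDerivAt.comp_hasDerivAt (x := u) (f := fun s => (s, v))
    ((hasDerivAt_id u).prodMk (hasDerivAt_const u v))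

theorem hasDerivAt_partial_right (hG : DifferentiableAt ℝ (uncurry G) (u, v)) :
    HasDerivAt (G u) (fderiv ℝ (uncurry G) (u, v) (0, 1)) v :=
  hG.hasFDerivAt.comp_hasDerivAt (x := v) (f := fun t => (u, t))
    ((hasDerivAt_const v u).prodMk (hasDerivAt_id v))

theorem Tvf_eq_fderiv (hG : DifferentiableAt ℝ (uncurry G) (u, v)) :
    Tvf G u v = fderiv ℝ (uncurry G) (u, v) (1, 1) := by
  rw [Tvf, (hasDerivAt_partial_left hG).deriv, (hasDerivAt_partial_right hG).deriv, ← map_add,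
    Prod.mk_add_mk, add_zero, zero_add]

theorem Lvf_eq_fderiv (hG : DifferentiableAt ℝ (uncurry G) (u, v)) :
    Lvf G u v = fderiv ℝ (uncurry G) (u, v) (0, 1) :=
  (hasDerivAt_partial_right hG).deriv

theorem uncurry_Tvf_eqOn_fderiv (hG : DifferentiableOn ℝ (uncurry G) U) (hU : IsOpen U) :
    EqOn (uncurry (Tvf G)) (fun p => fderiv ℝ (uncurry G) p (1, 1)) U := by
  rintro ⟨u, v⟩ hp
  exact Tvf_eq_fderiv (hG.differentiableAt (hU.mem_nhds hp))

theorem uncurry_Lvf_eqOn_fderiv (hG : DifferentiableOn ℝ (uncurry G) U) (hU : IsOpen U) :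
    EqOn (uncurry (Lvf G)) (fun p => fderiv ℝ (uncurry G) p (0, 1)) U := by
  rintro ⟨u, v⟩ hp
  exact Lvf_eq_fderiv (hG.differentiableAt (hU.mem_nhds hp))

theorem eventuallyEq_left_of_eqOn (hU : IsOpen U) (h : EqOn (uncurry G₁) (uncurry G₂) U)
    (hp : (u, v) ∈ U) : (fun s => G₁ s v) =ᶠ[𝓝 u] fun s => G₂ s v :=
  eventuallyEq_of_mem ((Continuous.prodMk_left v).continuousAt.preimage_mem_nhds
    (hU.mem_nhds hp)) fun _ hs => h hs

theorem eventuallyEq_right_of_eqOn (hU : IsOpen U) (h : EqOn (uncurry G₁) (uncurry G₂) U)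
    (hp : (u, v) ∈ U) : G₁ u =ᶠ[𝓝 v] G₂ u :=
  eventuallyEq_of_mem ((Continuous.prodMk_right u).continuousAt.preimage_mem_nhds
    (hU.mem_nhds hp)) fun _ ht => h ht

theorem Tvf_congr (hU : IsOpen U) (h : EqOn (uncurry G₁) (uncurry G₂) U) :
    EqOn (uncurry (Tvf G₁)) (uncurry (Tvf G₂)) U := by
  rintro ⟨u, v⟩ hp
  simp only [uncurry_apply_pair, Tvf, (eventuallyEq_left_of_eqOn hU h hp).deriv_eq,
    (eventuallyEq_right_of_eqOn hU h hp).deriv_eq]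

theorem Tvf_iterate_congr (hU : IsOpen U) (h : EqOn (uncurry G₁) (uncurry G₂) U) (K : ℕ) :
    EqOn (uncurry (Tvf^[K] G₁)) (uncurry (Tvf^[K] G₂)) U := by
  induction K with
  | zero => exact h
  | succ K ih => simpa only [iterate_succ_apply'] using Tvf_congr hU ih

theorem ContDiffOn.uncurry_Tvf (hG : ContDiffOn ℝ ∞ (uncurry G) U) (hU : IsOpen U) :
    ContDiffOn ℝ ∞ (uncurry (Tvf G)) U :=
  (hG.fderiv_apply_of_isOpen hU _).congr
    (uncurry_Tvf_eqOn_fderiv (hG.differentiableOn (by simp)) hU)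

theorem ContDiffOn.uncurry_Lvf (hG : ContDiffOn ℝ ∞ (uncurry G) U) (hU : IsOpen U) :
    ContDiffOn ℝ ∞ (uncurry (Lvf G)) U :=
  (hG.fderiv_apply_of_isOpen hU _).congr
    (uncurry_Lvf_eqOn_fderiv (hG.differentiableOn (by simp)) hU)

theorem ContDiffOn.uncurry_Tvf_iterate (hG : ContDiffOn ℝ ∞ (uncurry G) U) (hU : IsOpen U)
    (K : ℕ) : ContDiffOn ℝ ∞ (uncurry (Tvf^[K] G)) U := by
  induction K with
  | zero => exact hG
  | succ K ih => simpa only [iterate_succ_apply'] using ih.uncurry_Tvf hU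

theorem Tvf_Lvf_comm (hG : ContDiffOn ℝ ∞ (uncurry G) U) (hU : IsOpen U) :
    EqOn (uncurry (Tvf (Lvf G))) (uncurry (Lvf (Tvf G))) U := by
  rintro ⟨u, v⟩ hp
  have hnhds := hU.mem_nhds hp
  have hG' : DifferentiableOn ℝ (uncurry G) U := hG.differentiableOn (by simp)
  simp only [uncurry_apply_pair]
  rw [Tvf_eq_fderiv (((hG.uncurry_Lvf hU).contDiffAt hnhds).differentiableAt (by simp)),
    Lvf_eq_fderiv (((hG.uncurry_Tvf hU).contDiffAt hnhds).differentiableAt (by simp)),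
    (eventuallyEq_of_mem hnhds (uncurry_Lvf_eqOn_fderiv hG' hU)).fderiv_eq,
    (eventuallyEq_of_mem hnhds (uncurry_Tvf_eqOn_fderiv hG' hU)).fderiv_eq]
  exact fderiv_fderiv_apply_comm ((hG.contDiffAt hnhds).of_le (WithTop.coe_le_coe.2 le_top)) _ _

theorem Tvf_iterate_Lvf_comm (hG : ContDiffOn ℝ ∞ (uncurry G) U) (hU : IsOpen U) (K : ℕ) :
    EqOn (uncurry (Tvf^[K] (Lvf G))) (uncurry (Lvf (Tvf^[K] G))) U := by
  induction K with
  | zero => exact fun _ _ => rfl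
  | succ K ih =>
    simp only [iterate_succ_apply']
    exact (Tvf_congr hU ih).trans (Tvf_Lvf_comm (hG.uncurry_Tvf_iterate hU K) hU)

theorem Tvf_mul_comp_sub {φ h : ℝ → ℝ} (hφ : DifferentiableAt ℝ φ (v - u))
    (hh : DifferentiableAt ℝ h v) :
    Tvf (fun a b => φ (b - a) * h b) u v = φ (v - u) * deriv h v := by
  have hleft : HasDerivAt (fun s => φ (v - s) * h v) (deriv φ (v - u) * -1 * h v) u :=
    (hφ.hasDerivAt.comp u ((hasDerivAt_id u).const_sub v)).mul_const (h v)
  have hright : HasDerivAt (fun t => φ (t - u) * h t)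
      (deriv φ (v - u) * 1 * h v + φ (v - u) * deriv h v) v :=
    (hφ.hasDerivAt.comp v ((hasDerivAt_id v).sub_const u)).mul hh.hasDerivAt
  rw [Tvf, hleft.deriv, hright.deriv]
  ring

theorem Tvf_iterate_mul_comp_sub {φ h : ℝ → ℝ} (hU : IsOpen U)
    (hφ : ∀ p ∈ U, DifferentiableAt ℝ φ (p.2 - p.1))
    (hh : ∀ k, ∀ p ∈ U, DifferentiableAt ℝ (deriv^[k] h) p.2) (K : ℕ) :
    EqOn (uncurry (Tvf^[K] fun a b => φ (b - a) * h b))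
      (uncurry fun a b => φ (b - a) * deriv^[K] h b) U := by
  induction K with
  | zero => exact fun _ _ => rfl
  | succ K ih =>
    rintro ⟨u, v⟩ hp
    have hcongr := Tvf_congr hU ih hp
    simp only [uncurry_apply_pair] at hcongr
    rw [uncurry_apply_pair, iterate_succ_apply', hcongr, Tvf_mul_comp_sub (hφ _ hp) (hh K _ hp),
      iterate_succ_apply']
    rfl

end VectorFields

theorem Lvf_iterate_const (h : ℝ → ℝ) (K : ℕ) :
    Lvf^[K] (fun _ => h) = fun _ => deriv^[K] h := by
  induction K with
  | zero => rfl
  | succ K ih => rw [iterate_succ_apply', ih, iterate_succ_apply']; rfl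

theorem differentiableAt_iterate_deriv_rpow_const (r : ℝ) (k : ℕ) {x : ℝ} (hx : x ≠ 0) :
    DifferentiableAt ℝ (deriv^[k] fun y : ℝ => y ^ r) x := by
  simp only [funext (Real.iter_deriv_rpow_const r · k)]
  exact (Real.differentiableAt_rpow_const_of_ne _ hx).const_mul _

def sector : Set (ℝ × ℝ) := {p | 0 < p.1 ∧ p.1 < p.2}

theorem isOpen_sector : IsOpen sector :=
  (isOpen_lt continuous_const continuous_fst).inter (isOpen_lt continuous_fst continuous_snd)

noncomputable def primitiveF (m : ℝ) : ℝ → ℝ → ℝ :=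
  fun a b => (b - a) ^ (m - 1) / ((m - 1) * a * b ^ (m - 1))

theorem contDiffOn_uncurry_primitiveF {m : ℝ} (hm : m ≠ 1) :
    ContDiffOn ℝ ∞ (uncurry (primitiveF m)) sector := by
  rintro ⟨a, b⟩ ⟨ha, hab⟩
  have hb : 0 < b := ha.trans hab
  refine ContDiffAt.contDiffWithinAt (ContDiffAt.div ?_ ?_ ?_)
  · exact (contDiffAt_snd.sub contDiffAt_fst).rpow_const_of_ne (sub_pos.2 hab).ne'
  · exact (contDiffAt_const.mul contDiffAt_fst).mul (contDiffAt_snd.rpow_const_of_ne hb.ne')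
  · have := Real.rpow_pos_of_pos hb (m - 1)
    have : m - 1 ≠ 0 := sub_ne_zero.2 hm
    positivity

theorem hasDerivAt_primitiveF {m a b : ℝ} (hm : m ≠ 1) (ha : 0 < a) (hab : a < b) :
    HasDerivAt (primitiveF m a) ((b - a) ^ (m - 2) * b ^ (-m)) b := by
  have hb : 0 < b := ha.trans hab
  have hba : 0 < b - a := sub_pos.2 hab
  have hnum := ((hasDerivAt_id b).sub_const a).rpow_const (p := m - 1) (Or.inl hba.ne')
  have hden := (Real.hasDerivAt_rpow_const (p := m - 1) (Or.inl hb.ne')).const_mul ((m - 1) * a)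
  refine (hnum.div hden (by positivity)).congr_deriv ?_
  simp only [id]
  rw [show m - 1 - 1 = m - 2 by ring, Real.rpow_neg hb.le,
    show (b - a) ^ (m - 1) = (b - a) ^ (m - 2) * (b - a) by
      rw [← Real.rpow_add_one hba.ne']; ring_nf,
    show b ^ (m - 1) = b ^ (m - 2) * b by rw [← Real.rpow_add_one hb.ne']; ring_nf,
    show b ^ m = b ^ (m - 2) * b * b by
      rw [← Real.rpow_add_one hb.ne', ← Real.rpow_add_one hb.ne']; ring_nf]
  have := Real.rpow_pos_of_pos hb (m - 2)
  field_simp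
  ring

theorem Lvf_primitiveF {m : ℝ} (hm : m ≠ 1) :
    EqOn (uncurry (Lvf (primitiveF m))) (uncurry fun a b => (b - a) ^ (m - 2) * b ^ (-m))
      sector := by
  rintro ⟨a, b⟩ ⟨ha, hab⟩
  exact (hasDerivAt_primitiveF hm ha hab).deriv

theorem Lvf_Tvf_iterate_primitiveF {m : ℝ} (hm : m ≠ 1) (K : ℕ) {u v : ℝ}
    (hp : (u, v) ∈ sector) :
    Lvf (Tvf^[K] (primitiveF m)) u v = (v - u) ^ (m - 2) * Lvf^[K] (fun _ w => w ^ (-m)) u v :=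
  calc Lvf (Tvf^[K] (primitiveF m)) u v = Tvf^[K] (Lvf (primitiveF m)) u v :=
        (Tvf_iterate_Lvf_comm (contDiffOn_uncurry_primitiveF hm) isOpen_sector K hp).symm
    _ = Tvf^[K] (fun a b => (b - a) ^ (m - 2) * b ^ (-m)) u v :=
        Tvf_iterate_congr isOpen_sector (Lvf_primitiveF hm) K hp
    _ = (v - u) ^ (m - 2) * deriv^[K] (fun w => w ^ (-m)) v :=
        Tvf_iterate_mul_comp_sub (φ := fun x => x ^ (m - 2)) isOpen_sector
          (fun _ hp => Real.differentiableAt_rpow_const_of_ne _ (sub_pos.2 hp.2).ne')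
          (fun k _ hp => differentiableAt_iterate_deriv_rpow_const _ k (hp.1.trans hp.2).ne')
          K hp
    _ = (v - u) ^ (m - 2) * Lvf^[K] (fun _ w => w ^ (-m)) u v := by rw [Lvf_iterate_const]

/-- For `K ∈ ℕ₀`, `m > 1`, `0 < u < v₁ ≤ v₂`, and
`F(u,v) = (v-u)^(m-1) / ((m-1) u v^(m-1))`, one has
`∫_{v₁}^{v₂} (v-u)^(m-2) ∂_v^K (v^(-m)) dv = (T^K F)(u, v₂) - (T^K F)(u, v₁)`,
where `T = ∂_u + ∂_v`. -/
theorem integral_identity_TK (K : ℕ) (m u v₁ v₂ : ℝ)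
    (hm : 1 < m) (hu : 0 < u) (h1 : u < v₁) (h2 : v₁ ≤ v₂) :
    ∫ v in v₁..v₂, (v - u) ^ (m - 2) * Lvf^[K] (fun _ w => w ^ (-m)) u v
      = Tvf^[K] (fun a b => (b - a) ^ (m - 1) / ((m - 1) * a * b ^ (m - 1))) u v₂
        - Tvf^[K] (fun a b => (b - a) ^ (m - 1) / ((m - 1) * a * b ^ (m - 1))) u v₁ := by
  have hsector : MapsTo (fun v => (u, v)) (uIcc v₁ v₂) sector := fun v hv =>
    ⟨hu, h1.trans_le (uIcc_of_le h2 ▸ hv).1⟩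
  have hsmooth := (contDiffOn_uncurry_primitiveF hm.ne').uncurry_Tvf_iterate isOpen_sector K
  rw [intervalIntegral.integral_congr fun v hv =>
    (Lvf_Tvf_iterate_primitiveF hm.ne' K (hsector hv)).symm]
  refine intervalIntegral.integral_deriv_eq_sub' _ rfl (fun v hv => ?_)
    ((hsmooth.uncurry_Lvf isOpen_sector).continuousOn.comp
      (Continuous.prodMk_right u).continuousOn hsector)
  exact (hasDerivAt_partial_right ((hsmooth.contDiffAt
    (isOpen_sector.mem_nhds (hsector hv))).differentiableAt (by simp))).differentiableAt
end

section
/- Let $\psi: [r_+,\infty) \to \mathbb{R}$ be $C^2$, let $\Delta(r) = r^2 - 2Mr + a^2$ with $0 \le |a| < M$ and $r_+ = M+\sqrt{M^2-a^2}$, suppose $\psi$ and $\Delta\, \psi'$ are bounded and $\Delta (\psi')^2 \to 0$ as $r \to \infty$, and suppose $X(\Delta X\psi) = F$ pointwise on $[r_+,\infty)$ where $X = d/dr$. If $\int_{r_+}^\infty r^{-1} F^2\, dr < \infty$, then $\int_{r_+}^\infty r\,(\psi')^2\, dr \le C \int_{r_+}^\infty r^{-1} F^2\, dr$ for a constant $C$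 depending only on $M$ and $a$. -/
/-!
Multiply `(Δ ψ')' = F` by `ψ'`: with `u = ψ'` one has `(Δ u²)' = 2 (Δ u)' u - Δ' u²`, and
`Δ u²` vanishes at `r₊` and is nonnegative beyond it, so `∫ Δ' u² ≤ ∫ 2 F u` over every
`[r₊, R]`. Beyond the horizon `Δ'(r) = 2 (r - M) ≥ 2 c r` with `c = √(M² - a²) / r₊`, and
`2 F u ≤ (c r)⁻¹ F² + c r u²`; absorbing the last term gives `∫ r u² ≤ c⁻² ∫ r⁻¹ F²` on each
`[r₊, R]`, and monotone convergence lets `R → ∞`.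
-/

open MeasureTheory Filter Set

theorem two_mul_le_inv_mul_sq_add_mul_sq {t : ℝ} (ht : 0 < t) (p q : ℝ) :
    2 * p * q ≤ t⁻¹ * p ^ 2 + t * q ^ 2 := by
  have h := mul_nonneg (inv_nonneg.2 ht.le) (sq_nonneg (p - t * q))
  have : t⁻¹ * (p - t * q) ^ 2 = t⁻¹ * p ^ 2 - 2 * p * q + t * q ^ 2 := by
    field_simp; ring
  linarith

theorem setLIntegral_Ioi_le_of_forall_Ioc_le {f : ℝ → ENNReal} {a : ℝ} {K : ENNReal}
    (h : ∀ b, a ≤ b → ∫⁻ x in Ioc a b, f x ≤ K) : ∫⁻ x in Ioi a, f x ≤ K := by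
  have hIoi : Ioi a ⊆ ⋃ n : ℕ, Ioc a (a + n) := fun x hx =>
    mem_iUnion.2 ⟨⌈x - a⌉₊, hx, by linarith [Nat.le_ceil (x - a)]⟩
  have hmono : Monotone fun n : ℕ => Ioc a (a + n) := fun m n hmn =>
    Ioc_subset_Ioc_right (by gcongr)
  calc ∫⁻ x in Ioi a, f x ≤ ∫⁻ x in ⋃ n : ℕ, Ioc a (a + n), f x := lintegral_mono_set hIoi
    _ = ⨆ n : ℕ, ∫⁻ x in Ioc a (a + n), f x :=
      setLIntegral_iUnion_of_directed f hmono.directed_le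
    _ ≤ K := iSup_le fun n => h _ (by simp)

section Multiplier

variable {D D' u u' : ℝ → ℝ} {a b c : ℝ}

theorem integral_deriv_mul_sq_le (hab : a ≤ b)
    (hD : ∀ x ∈ Icc a b, HasDerivAt D (D' x) x) (hu : ∀ x ∈ Icc a b, HasDerivAt u (u' x) x)
    (hD' : ContinuousOn D' (Icc a b)) (hu' : ContinuousOn u' (Icc a b))
    (hDa : D a = 0) (hDb : 0 ≤ D b) :
    ∫ x in a..b, D' x * u x ^ 2 ≤ ∫ x in a..b, 2 * (D' x * u x + D x * u' x) * u x := by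
  rw [← uIcc_of_le hab] at hD hu hD' hu'
  have hDc := HasDerivAt.continuousOn hD
  have huc := HasDerivAt.continuousOn hu
  have henergy : ∀ x ∈ uIcc a b, HasDerivAt (fun x => D x * u x ^ 2)
      (2 * (D' x * u x + D x * u' x) * u x - D' x * u x ^ 2) x := fun x hx =>
    ((hD x hx).mul ((hu x hx).fun_pow 2)).congr_deriv (by ring)
  have hL : IntervalIntegrable (fun x => D' x * u x ^ 2) volume a b :=
    ContinuousOn.intervalIntegrable (by fun_prop)
  have hR : IntervalIntegrable (fun x => 2 * (D' x * u x + D x * u' x) * u x) volume a b :=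
    ContinuousOn.intervalIntegrable (by fun_prop)
  have hftc := intervalIntegral.integral_eq_sub_of_hasDerivAt henergy (hR.sub hL)
  rw [intervalIntegral.integral_sub hR hL, hDa] at hftc
  nlinarith [mul_nonneg hDb (sq_nonneg (u b))]

theorem integral_mul_sq_le_of_multiplier (ha : 0 < a) (hab : a ≤ b) (hc : 0 < c)
    (hD : ∀ x ∈ Icc a b, HasDerivAt D (D' x) x) (hu : ∀ x ∈ Icc a b, HasDerivAt u (u' x) x)
    (hD' : ContinuousOn D' (Icc a b)) (hu' : ContinuousOn u' (Icc a b))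
    (hDa : D a = 0) (hDb : 0 ≤ D b) (hD'_ge : ∀ x ∈ Icc a b, 2 * c * x ≤ D' x) :
    ∫ x in a..b, x * u x ^ 2 ≤
      (c ^ 2)⁻¹ * ∫ x in a..b, x⁻¹ * (D' x * u x + D x * u' x) ^ 2 := by
  have hDc := HasDerivAt.continuousOn hD
  have huc := HasDerivAt.continuousOn hu
  have hinv : ContinuousOn (fun x : ℝ => x⁻¹) (Icc a b) :=
    continuousOn_inv₀.mono fun x hx => (ha.trans_le hx.1).ne'
  have hint {f : ℝ → ℝ} (hf : ContinuousOn f (Icc a b)) : IntervalIntegrable f volume a b :=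
    (uIcc_of_le hab ▸ hf).intervalIntegrable
  set I := ∫ x in a..b, x * u x ^ 2
  set J := ∫ x in a..b, x⁻¹ * (D' x * u x + D x * u' x) ^ 2
  have habsorb : 2 * c * I ≤ c⁻¹ * J + c * I :=
    calc 2 * c * I = ∫ x in a..b, 2 * c * (x * u x ^ 2) :=
          (intervalIntegral.integral_const_mul _ _).symm
      _ ≤ ∫ x in a..b, D' x * u x ^ 2 :=
          intervalIntegral.integral_mono_on hab (hint (by fun_prop)) (hint (by fun_prop))
            fun x hx => by
              rw [← mul_assoc]; exact mul_le_mul_of_nonneg_right (hD'_ge x hx) (sq_nonneg _)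
      _ ≤ ∫ x in a..b, 2 * (D' x * u x + D x * u' x) * u x :=
          integral_deriv_mul_sq_le hab hD hu hD' hu' hDa hDb
      _ ≤ ∫ x in a..b, c⁻¹ * (x⁻¹ * (D' x * u x + D x * u' x) ^ 2) + c * (x * u x ^ 2) :=
          intervalIntegral.integral_mono_on hab (hint (by fun_prop)) (hint (by fun_prop))
            fun x hx =>
              (two_mul_le_inv_mul_sq_add_mul_sq (mul_pos hc (ha.trans_le hx.1)) _ _).trans_eq
                (by rw [mul_inv]; ring)
      _ = c⁻¹ * J + c * I := by
          rw [intervalIntegral.integral_add ((hint (by fun_prop)).const_mul _)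
            ((hint (by fun_prop)).const_mul _), intervalIntegral.integral_const_mul,
            intervalIntegral.integral_const_mul]
  calc I = c⁻¹ * (c * I) := by field_simp
    _ ≤ c⁻¹ * (c⁻¹ * J) := mul_le_mul_of_nonneg_left (by linarith) (by positivity)
    _ = (c ^ 2)⁻¹ * J := by ring

theorem setLIntegral_Ioi_mul_sq_le_of_multiplier (ha : 0 < a) (hc : 0 < c)
    (hD : ∀ x ∈ Ici a, HasDerivAt D (D' x) x) (hu : ∀ x ∈ Ici a, HasDerivAt u (u' x) x)
    (hD' : ContinuousOn D' (Ici a)) (hu' : ContinuousOn u' (Ici a))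
    (hDa : D a = 0) (hD_nonneg : ∀ x ∈ Ici a, 0 ≤ D x)
    (hD'_ge : ∀ x ∈ Ici a, 2 * c * x ≤ D' x) :
    ∫⁻ x in Ioi a, ENNReal.ofReal (x * u x ^ 2) ≤ ENNReal.ofReal (c ^ 2)⁻¹ *
      ∫⁻ x in Ioi a, ENNReal.ofReal (x⁻¹ * (D' x * u x + D x * u' x) ^ 2) := by
  refine setLIntegral_Ioi_le_of_forall_Ioc_le fun b hab => ?_
  have hsub : Icc a b ⊆ Ici a := Icc_subset_Ici_self
  have huc := (HasDerivAt.continuousOn hu).mono hsub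
  have hDc := (HasDerivAt.continuousOn hD).mono hsub
  have hD'c := hD'.mono hsub
  have hu'c := hu'.mono hsub
  have hinv : ContinuousOn (fun x : ℝ => x⁻¹) (Icc a b) :=
    continuousOn_inv₀.mono fun x hx => (ha.trans_le hx.1).ne'
  have hfin := integral_mul_sq_le_of_multiplier ha hab hc (fun x hx => hD x (hsub hx))
    (fun x hx => hu x (hsub hx)) hD'c hu'c hDa
    (hD_nonneg b (mem_Ici.2 hab)) fun x hx => hD'_ge x (hsub hx)
  have hpos : ∀ᵐ x ∂volume.restrict (Ioc a b), 0 < x :=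
    (ae_restrict_iff' measurableSet_Ioc).2 (ae_of_all _ fun x hx => ha.trans hx.1)
  have hofReal (f : ℝ → ℝ) (hf : ContinuousOn f (Icc a b)) (hf0 : ∀ x, 0 < x → 0 ≤ f x) :
      ENNReal.ofReal (∫ x in a..b, f x) = ∫⁻ x in Ioc a b, ENNReal.ofReal (f x) := by
    rw [intervalIntegral.integral_of_le hab, ofReal_integral_eq_lintegral_ofReal
      ((hf.integrableOn_Icc).mono_set Ioc_subset_Icc_self) (hpos.mono fun x hx => hf0 x hx)]
  calc ∫⁻ x in Ioc a b, ENNReal.ofReal (x * u x ^ 2)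
      = ENNReal.ofReal (∫ x in a..b, x * u x ^ 2) :=
        (hofReal _ (by fun_prop) fun x hx => by positivity).symm
    _ ≤ ENNReal.ofReal ((c ^ 2)⁻¹ * ∫ x in a..b, x⁻¹ * (D' x * u x + D x * u' x) ^ 2) :=
        ENNReal.ofReal_le_ofReal hfin
    _ = ENNReal.ofReal (c ^ 2)⁻¹ *
          ∫⁻ x in Ioc a b, ENNReal.ofReal (x⁻¹ * (D' x * u x + D x * u' x) ^ 2) := by
        rw [ENNReal.ofReal_mul (by positivity),
          hofReal (fun x => x⁻¹ * (D' x * u x + D x * u' x) ^ 2) (by fun_prop)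
            fun x hx => by positivity]
    _ ≤ _ := by gcongr; exact Ioc_subset_Ioi_self

end Multiplier

theorem kerrDelta_outerHorizon_eq_zero {M a : ℝ} (h : a ^ 2 ≤ M ^ 2) :
    (M + √(M ^ 2 - a ^ 2)) ^ 2 - 2 * M * (M + √(M ^ 2 - a ^ 2)) + a ^ 2 = 0 := by
  nlinarith [Real.sq_sqrt (sub_nonneg.2 h)]

theorem kerrDelta_nonneg {M a r : ℝ} (h : a ^ 2 ≤ M ^ 2) (hr : M + √(M ^ 2 - a ^ 2) ≤ r) :
    0 ≤ r ^ 2 - 2 * M * r + a ^ 2 := by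
  nlinarith [Real.sq_sqrt (sub_nonneg.2 h), Real.sqrt_nonneg (M ^ 2 - a ^ 2)]

theorem two_mul_div_add_mul_le_two_mul_sub {M s r : ℝ} (hM : 0 ≤ M) (hMs : 0 < M + s)
    (hr : M + s ≤ r) : 2 * (s / (M + s)) * r ≤ 2 * r - 2 * M := by
  rw [mul_assoc, div_mul_eq_mul_div, mul_div_assoc', div_le_iff₀ hMs]
  nlinarith

theorem spacelike_redshift_estimate_general (M a : ℝ) (ha : |a| < M) :
    ∃ C : ℝ, 0 < C ∧ ∀ ψ F : ℝ → ℝ,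
      ContDiff ℝ 2 ψ →
      (∃ B, ∀ r ≥ M + Real.sqrt (M ^ 2 - a ^ 2),
        |ψ r| ≤ B ∧ |(r ^ 2 - 2 * M * r + a ^ 2) * deriv ψ r| ≤ B) →
      Tendsto (fun r => (r ^ 2 - 2 * M * r + a ^ 2) * (deriv ψ r) ^ 2) atTop (nhds 0) →
      (∀ r ≥ M + Real.sqrt (M ^ 2 - a ^ 2),
        deriv (fun s => (s ^ 2 - 2 * M * s + a ^ 2) * deriv ψ s) r = F r) →
      (∫⁻ r in Set.Ioi (M + Real.sqrt (M ^ 2 - a ^ 2)),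
          ENNReal.ofReal (r⁻¹ * F r ^ 2)) ≠ ⊤ →
      (∫⁻ r in Set.Ioi (M + Real.sqrt (M ^ 2 - a ^ 2)),
          ENNReal.ofReal (r * (deriv ψ r) ^ 2))
        ≤ ENNReal.ofReal C *
          ∫⁻ r in Set.Ioi (M + Real.sqrt (M ^ 2 - a ^ 2)),
            ENNReal.ofReal (r⁻¹ * F r ^ 2) := by
  have hM : 0 ≤ M := (abs_nonneg a).trans ha.le
  have haM : a ^ 2 < M ^ 2 := sq_lt_sq' (neg_lt_of_abs_lt ha) (lt_of_abs_lt ha)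
  set s := √(M ^ 2 - a ^ 2)
  have hs : 0 < s := Real.sqrt_pos.2 (sub_pos.2 haM)
  have hrp : 0 < M + s := by positivity
  refine ⟨((s / (M + s)) ^ 2)⁻¹, by positivity, fun ψ F hψ _ _ hF _ => ?_⟩
  have hψ' : ContDiff ℝ 1 (deriv ψ) := hψ.deriv'
  have hΔ (x : ℝ) : HasDerivAt (fun r => r ^ 2 - 2 * M * r + a ^ 2) (2 * x - 2 * M) x := by
    simpa using ((hasDerivAt_pow 2 x).sub ((hasDerivAt_id x).const_mul (2 * M))).add_const (a ^ 2)
  have hu (x : ℝ) : HasDerivAt (deriv ψ) (deriv (deriv ψ) x) x :=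
    (hψ'.differentiable one_ne_zero x).hasDerivAt
  refine (setLIntegral_Ioi_mul_sq_le_of_multiplier hrp (by positivity) (fun x _ => hΔ x)
    (fun x _ => hu x) (by fun_prop) hψ'.continuous_deriv_one.continuousOn
    (kerrDelta_outerHorizon_eq_zero haM.le) (fun x hx => kerrDelta_nonneg haM.le hx)
    fun x hx => two_mul_div_add_mul_le_two_mul_sub hM hrp hx).trans_eq
    (congrArg _ (setLIntegral_congr_fun measurableSet_Ioi fun x hx => ?_))
  rw [← hF x hx.le, ((hΔ x).fun_mul (hu x)).deriv]

/-- **Spacelike redshift multiplier estimate (radial model).**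
Let `Δ(r) = r² - 2Mr + a²` with `0 ≤ |a| < M`, `r₊ = M + √(M²-a²)`. There is a
constant `C = C(M,a) > 0` such that: if `ψ` is `C²`, `ψ` and `Δ ψ'` are bounded on
`[r₊,∞)`, `Δ (ψ')² → 0` at infinity, `(Δ ψ')' = F` pointwise on `[r₊,∞)`, and
`∫_{r₊}^∞ r⁻¹ F² < ∞`, then `∫_{r₊}^∞ r (ψ')² ≤ C ∫_{r₊}^∞ r⁻¹ F²`. -/
theorem spacelike_redshift_estimate (M a : ℝ) (hM : 0 < M) (ha : |a| < M) :
    ∃ C : ℝ, 0 < C ∧ ∀ ψ F : ℝ → ℝ,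
      ContDiff ℝ 2 ψ →
      (∃ B, ∀ r ≥ M + Real.sqrt (M ^ 2 - a ^ 2),
        |ψ r| ≤ B ∧ |(r ^ 2 - 2 * M * r + a ^ 2) * deriv ψ r| ≤ B) →
      Tendsto (fun r => (r ^ 2 - 2 * M * r + a ^ 2) * (deriv ψ r) ^ 2) atTop (nhds 0) →
      (∀ r ≥ M + Real.sqrt (M ^ 2 - a ^ 2),
        deriv (fun s => (s ^ 2 - 2 * M * s + a ^ 2) * deriv ψ s) r = F r) →
      (∫⁻ r in Set.Ioi (M + Real.sqrt (M ^ 2 - a ^ 2)),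
          ENNReal.ofReal (r⁻¹ * F r ^ 2)) ≠ ⊤ →
      (∫⁻ r in Set.Ioi (M + Real.sqrt (M ^ 2 - a ^ 2)),
          ENNReal.ofReal (r * (deriv ψ r) ^ 2))
        ≤ ENNReal.ofReal C *
          ∫⁻ r in Set.Ioi (M + Real.sqrt (M ^ 2 - a ^ 2)),
            ENNReal.ofReal (r⁻¹ * F r ^ 2) :=
  spacelike_redshift_estimate_general M a ha
end

section
/- Let $G: [r_+, \infty) \to \mathbb{R}$ be continuous and compactly supported, and for constants $M > 0$, $|a| < M$ set $\Delta(r) = (r - r_+)(r - r_-)$ with $r_\pm = M \pm \sqrt{M^2 - a^2}$. Define $Q = \int_{r_+}^{\infty} G(\rho)\, d\rho$ and $\psi(\rho) = -\int_{\rho}^{\infty} \Delta(\rho_1)^{-1} \int_{r_+}^{\rho_1} G(\rho_2)\, d\rho_2\, d\rho_1$ for $\rho > r_+$. Then as $\rho \to \infty$: $(r^2+a^2)^{1/2}\psi(\rho) = -Q\,(1 + M\rho^{-1}) + \frac{1}{2}\big(\lim_{\rho' \to \infty}\rho' G(\rho')\big)\rho^{-1} + O(\rho^{-2})$ and $\rho^2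 \frac{d}{d\rho}\big((r^2+a^2)^{1/2}\psi\big)(\rho) = M Q - \frac{1}{2}\lim_{\rho'\to\infty}\rho' G(\rho') + O(\rho^{-1})$; in particular, since $G$ is compactly supported the limit term vanishes and $\lim_{\rho\to\infty} \rho^2 \frac{d}{d\rho}\big((r^2+a^2)^{1/2}\psi\big) = M Q$. -/
/-!
Beyond the support of `G` the inner integral in `ψ` is the constant `Q`, and
`Δ = (ρ - r₊)(ρ - r₋)` has the explicit primitive `(log (ρ - r₊) - log (ρ - r₋)) / (r₊ - r₋)`
vanishing at `+∞`, so `ψ` is `Q` times that primitive for large `ρ`. The expansions then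
follow from `log (1 - t) = -t - t² / 2 + O(t³)`, `√(ρ² + a²) = ρ + O(ρ⁻¹)` and
`ρ³ / Δ = ρ + (r₊ + r₋) + O(ρ⁻¹)`, with `r₊ + r₋ = 2M`.
-/

open Filter MeasureTheory Real Set Asymptotics Topology

lemma isBigO_inv_pow_of_le {m n : ℕ} (hmn : m ≤ n) :
    (fun x : ℝ => (x ^ n)⁻¹) =O[atTop] fun x => (x ^ m)⁻¹ := by
  refine IsBigO.of_bound 1 ?_
  filter_upwards [eventually_ge_atTop 1] with x hx
  have hx0 : 0 < x := by linarith
  rw [one_mul, norm_inv, norm_inv, norm_of_nonneg (by positivity), norm_of_nonneg (by positivity)]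
  exact inv_anti₀ (by positivity) (pow_le_pow_right₀ hx hmn)

lemma Asymptotics.IsBigO.id_mul_of_inv_pow_succ {f : ℝ → ℝ} {n : ℕ}
    (h : f =O[atTop] fun x => (x ^ (n + 1))⁻¹) :
    (fun x => x * f x) =O[atTop] fun x => (x ^ n)⁻¹ := by
  refine ((isBigO_refl id atTop).mul h).trans_eventuallyEq ?_
  filter_upwards [eventually_ne_atTop 0] with x hx
  simp only [id, pow_succ]
  field_simp

lemma exists_abs_le_div_pow_of_isBigO {f : ℝ → ℝ} {n : ℕ}
    (h : f =O[atTop] fun x => (x ^ n)⁻¹) : ∃ C R, ∀ x ≥ R, |f x| ≤ C / x ^ n := by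
  obtain ⟨C, hC⟩ := h.bound
  obtain ⟨R, hR⟩ := eventually_atTop.1 (hC.and (eventually_gt_atTop 0))
  refine ⟨C, R, fun x hx => ?_⟩
  obtain ⟨hfx, hx0⟩ := hR x hx
  rwa [norm_eq_abs, norm_inv, norm_of_nonneg (by positivity), ← div_eq_mul_inv] at hfx

lemma Filter.EventuallyEq.deriv_atTop {f g : ℝ → ℝ} (h : f =ᶠ[atTop] g) :
    deriv f =ᶠ[atTop] deriv g := by
  obtain ⟨R, hR⟩ := eventually_atTop.1 h
  filter_upwards [eventually_gt_atTop R] with x hx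
  exact EventuallyEq.deriv_eq (eventually_of_mem (Ioi_mem_nhds hx) fun y hy => hR y hy.out.le)

lemma HasCompactSupport.eventuallyEq_zero_atTop {G : ℝ → ℝ} (hG : HasCompactSupport G) :
    G =ᶠ[atTop] 0 :=
  eventually_of_mem (atTop_le_cocompact hG.isCompact.compl_mem_cocompact) fun _ hx =>
    image_eq_zero_of_notMem_tsupport hx

lemma isBigO_log_one_sub_add_add :
    (fun t : ℝ => log (1 - t) + t + t ^ 2 / 2) =O[𝓝 0] fun t => t ^ 3 := by
  refine IsBigO.of_bound 2 ?_
  filter_upwards [Metric.ball_mem_nhds (0 : ℝ) (by norm_num : (0 : ℝ) < 1 / 2)] with t ht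
  rw [Metric.mem_ball, dist_zero_right, norm_eq_abs] at ht
  rw [norm_eq_abs, norm_eq_abs, abs_pow]
  calc |log (1 - t) + t + t ^ 2 / 2|
      = |(∑ i ∈ Finset.range 2, t ^ (i + 1) / (i + 1)) + log (1 - t)| := by
        norm_num [Finset.sum_range_succ]
        ring_nf
    _ ≤ |t| ^ 3 / (1 - |t|) := abs_log_sub_add_sum_range_le (by linarith) 2
    _ ≤ 2 * |t| ^ 3 := by
      rw [div_le_iff₀ (by linarith)]
      nlinarith [pow_nonneg (abs_nonneg t) 3]

lemma isBigO_log_one_sub_div_add_add (c : ℝ) :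
    (fun x : ℝ => log (1 - c / x) + c / x + (c / x) ^ 2 / 2) =O[atTop] fun x => (x ^ 3)⁻¹ :=
  (isBigO_log_one_sub_add_add.comp_tendsto (tendsto_const_nhds.div_atTop tendsto_id)).trans <|
    (isBigO_const_mul_self (c ^ 3) _ _).congr_left fun x => by simp only [Function.comp, id]; ring

lemma isBigO_sqrt_sq_add_sq_sub_self (a : ℝ) :
    (fun x => √(x ^ 2 + a ^ 2) - x) =O[atTop] fun x => x⁻¹ := by
  refine IsBigO.of_bound (a ^ 2) ?_
  filter_upwards [eventually_gt_atTop 0] with x hx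
  have hs : x ≤ √(x ^ 2 + a ^ 2) := le_sqrt_of_sq_le (by nlinarith)
  have hsq : √(x ^ 2 + a ^ 2) ^ 2 = x ^ 2 + a ^ 2 := sq_sqrt (by positivity)
  rw [norm_of_nonneg (by linarith), norm_inv, norm_of_nonneg hx.le, ← div_eq_mul_inv,
    le_div_iff₀ hx]
  nlinarith

lemma isBigO_sq_mul_div_sqrt_sq_add_sq_sub_one (a : ℝ) :
    (fun x => x ^ 2 * (x / √(x ^ 2 + a ^ 2) - 1)) =O[atTop] fun _ => (1 : ℝ) := by
  refine IsBigO.of_bound (a ^ 2) ?_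
  filter_upwards [eventually_gt_atTop 0] with x hx
  have hs : x ≤ √(x ^ 2 + a ^ 2) := le_sqrt_of_sq_le (by nlinarith)
  have hsq : √(x ^ 2 + a ^ 2) ^ 2 = x ^ 2 + a ^ 2 := sq_sqrt (by positivity)
  have hs0 : 0 < √(x ^ 2 + a ^ 2) := hx.trans_le hs
  rw [div_sub_one hs0.ne', norm_one, mul_one, norm_eq_abs, abs_mul, abs_div, abs_of_pos hs0,
    abs_of_nonpos (show x - √(x ^ 2 + a ^ 2) ≤ 0 by linarith), abs_of_nonneg (sq_nonneg x),
    ← mul_div_assoc, div_le_iff₀ hs0]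
  nlinarith [mul_le_mul_of_nonneg_left hs (sq_nonneg a)]

lemma isBigO_inv_mul_sub_mul_sub (b c : ℝ) :
    (fun x => ((x - b) * (x - c))⁻¹) =O[atTop] fun x => (x ^ 2)⁻¹ := by
  have hequiv (d : ℝ) : (fun x => x - d) ~[atTop] id :=
    ((isLittleO_const_id_atTop d).neg_left).congr_left fun x => by simp
  refine (((hequiv b).symm.isBigO.mul (hequiv c).symm.isBigO).inv_rev ?_).congr_right
    fun x => by simp [sq]
  filter_upwards [eventually_gt_atTop 0] with x hx h
  exact absurd h (mul_ne_zero hx.ne' hx.ne')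

lemma isBigO_cube_mul_inv_mul_sub_mul_sub_sub (b c : ℝ) :
    (fun x => x ^ 3 * ((x - b) * (x - c))⁻¹ - x - (b + c)) =O[atTop] fun x => x⁻¹ := by
  have hD := isBigO_inv_mul_sub_mul_sub b c
  have hxD := hD.id_mul_of_inv_pow_succ
  have hD' := hD.trans (isBigO_inv_pow_of_le (m := 1) (by norm_num))
  simp only [pow_one] at hxD hD'
  -- `x³ - (x + b + c)(x - b)(x - c)` is linear in `x`
  refine ((hxD.const_mul_left ((b + c) ^ 2 - b * c)).sub
    (hD'.const_mul_left ((b + c) * (b * c)))).congr' ?_ EventuallyEq.rfl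
  filter_upwards [eventually_gt_atTop b, eventually_gt_atTop c] with x hbx hcx
  have hb : x - b ≠ 0 := sub_ne_zero.2 hbx.ne'
  have hc : x - c ≠ 0 := sub_ne_zero.2 hcx.ne'
  field_simp
  ring

noncomputable def quadInvPrimitive (b c x : ℝ) : ℝ :=
  (log (x - b) - log (x - c)) / (b - c)

lemma isBigO_quadInvPrimitive_add {b c : ℝ} (hbc : b ≠ c) :
    (fun x => quadInvPrimitive b c x + x⁻¹ + (b + c) / 2 * (x ^ 2)⁻¹) =O[atTop]
      fun x => (x ^ 3)⁻¹ := by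
  refine (((isBigO_log_one_sub_div_add_add b).sub
    (isBigO_log_one_sub_div_add_add c)).const_mul_left (b - c)⁻¹).congr' ?_ EventuallyEq.rfl
  filter_upwards [eventually_gt_atTop 0, eventually_gt_atTop b, eventually_gt_atTop c]
    with x hx hbx hcx
  have hlog (d : ℝ) (hd : d < x) : log (x - d) = log x + log (1 - d / x) := by
    have hd' : 0 < 1 - d / x := by rwa [sub_pos, div_lt_one hx]
    rw [← log_mul hx.ne' hd'.ne', mul_sub, mul_one, mul_div_cancel₀ _ hx.ne']
  have hbc' : b - c ≠ 0 := sub_ne_zero.2 hbc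
  rw [quadInvPrimitive, hlog b hbx, hlog c hcx]
  field_simp
  ring

lemma isBigO_quadInvPrimitive {b c : ℝ} (hbc : b ≠ c) :
    quadInvPrimitive b c =O[atTop] fun x => x⁻¹ := by
  have h₃ := (isBigO_quadInvPrimitive_add hbc).trans (isBigO_inv_pow_of_le (m := 1) (by norm_num))
  have h₂ := ((isBigO_inv_pow_of_le (m := 1) (n := 2) (by norm_num)).const_mul_left ((b + c) / 2))
  simp only [pow_one] at h₃ h₂
  exact ((h₃.sub (isBigO_refl _ _)).sub h₂).congr_left fun x => by ring

lemma tendsto_quadInvPrimitive_atTop {b c : ℝ} (hbc : b ≠ c) :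
    Tendsto (quadInvPrimitive b c) atTop (𝓝 0) :=
  (isBigO_quadInvPrimitive hbc).trans_tendsto tendsto_inv_atTop_zero

lemma hasDerivAt_quadInvPrimitive {b c x : ℝ} (hbc : b ≠ c) (hbx : b < x) (hcx : c < x) :
    HasDerivAt (quadInvPrimitive b c) ((x - b) * (x - c))⁻¹ x := by
  have hb : x - b ≠ 0 := sub_ne_zero.2 hbx.ne'
  have hc : x - c ≠ 0 := sub_ne_zero.2 hcx.ne'
  refine ((((hasDerivAt_id x).sub_const b).log hb).sub
    (((hasDerivAt_id x).sub_const c).log hc)).div_const (b - c) |>.congr_deriv ?_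
  simp only [id]
  field_simp [sub_ne_zero.2 hbc]
  ring

lemma integral_Ioi_inv_mul_sub_mul_sub {b c x : ℝ} (hcb : c < b) (hbx : b < x) :
    ∫ y in Ioi x, ((y - b) * (y - c))⁻¹ = -quadInvPrimitive b c x := by
  rw [integral_Ioi_of_hasDerivAt_of_nonneg' (fun y hy => ?_) (fun y hy => ?_)
    (tendsto_quadInvPrimitive_atTop hcb.ne'), zero_sub]
  · exact hasDerivAt_quadInvPrimitive hcb.ne' (hbx.trans_le hy) (hcb.trans (hbx.trans_le hy))
  · have hby : b < y := hbx.trans hy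
    exact inv_nonneg.2 (mul_nonneg (by linarith) (by linarith))

lemma intervalIntegral_eq_integral_Ioi_of_eq_zero {G : ℝ → ℝ} {b y : ℝ} (hby : b ≤ y)
    (hG : ∀ z, y < z → G z = 0) : ∫ z in b..y, G z = ∫ z in Ioi b, G z := by
  rw [intervalIntegral.integral_of_le hby, setIntegral_eq_of_subset_of_forall_sdiff_eq_zero
    measurableSet_Ioi Ioc_subset_Ioi_self]
  rintro z ⟨hbz, hzy⟩
  exact hG z (lt_of_not_ge fun h => hzy ⟨hbz, h⟩)

lemma eventuallyEq_neg_integral_Ioi_inv_mul_sub_mul_sub_mul {b c : ℝ} (hcb : c < b)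
    {G : ℝ → ℝ} (hG : G =ᶠ[atTop] 0) :
    (fun x => -∫ y in Ioi x, ((y - b) * (y - c))⁻¹ * ∫ z in b..y, G z) =ᶠ[atTop]
      fun x => (∫ z in Ioi b, G z) * quadInvPrimitive b c x := by
  obtain ⟨R, hR⟩ := eventually_atTop.1 hG
  filter_upwards [eventually_ge_atTop R, eventually_gt_atTop b] with x hRx hbx
  have hinner : ∀ y ∈ Ioi x, ∫ z in b..y, G z = ∫ z in Ioi b, G z := fun y hy =>
    intervalIntegral_eq_integral_Ioi_of_eq_zero (hbx.trans hy).le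
      fun z hz => hR z (hRx.trans (hy.out.trans hz).le)
  rw [setIntegral_congr_fun measurableSet_Ioi fun y hy => by rw [hinner y hy], integral_mul_const,
    integral_Ioi_inv_mul_sub_mul_sub hcb hbx]
  ring

lemma isBigO_mul_quadInvPrimitive_add {b c : ℝ} (hbc : b ≠ c) :
    (fun x => x * quadInvPrimitive b c x + 1 + (b + c) / 2 * x⁻¹) =O[atTop]
      fun x => (x ^ 2)⁻¹ := by
  refine (isBigO_quadInvPrimitive_add hbc).id_mul_of_inv_pow_succ.congr' ?_ EventuallyEq.rfl
  filter_upwards [eventually_ne_atTop 0] with x hx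
  field_simp

lemma isBigO_sq_mul_quadInvPrimitive_add {b c : ℝ} (hbc : b ≠ c) :
    (fun x => x ^ 2 * quadInvPrimitive b c x + x + (b + c) / 2) =O[atTop] fun x => x⁻¹ := by
  refine (isBigO_mul_quadInvPrimitive_add hbc).id_mul_of_inv_pow_succ.congr' ?_ ?_
  · filter_upwards [eventually_ne_atTop 0] with x hx
    field_simp
  · exact EventuallyEq.of_eq (funext fun x => by rw [pow_one])

lemma isBigO_sqrt_mul_quadInvPrimitive_add (a : ℝ) {b c : ℝ} (hbc : b ≠ c) :
    (fun x => √(x ^ 2 + a ^ 2) * quadInvPrimitive b c x + 1 + (b + c) / 2 * x⁻¹) =O[atTop]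
      fun x => (x ^ 2)⁻¹ :=
  (((isBigO_sqrt_sq_add_sq_sub_self a).mul (isBigO_quadInvPrimitive hbc)).congr_right
    (fun x => by ring)).add (isBigO_mul_quadInvPrimitive_add hbc) |>.congr_left fun x => by ring

lemma hasDerivAt_sqrt_mul_quadInvPrimitive {a b c x : ℝ} (hbc : b ≠ c) (hbx : b < x)
    (hcx : c < x) (hxa : x ^ 2 + a ^ 2 ≠ 0) :
    HasDerivAt (fun y => √(y ^ 2 + a ^ 2) * quadInvPrimitive b c y)
      (x / √(x ^ 2 + a ^ 2) * quadInvPrimitive b c x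
        + √(x ^ 2 + a ^ 2) * ((x - b) * (x - c))⁻¹) x := by
  have hs := (((hasDerivAt_pow 2 x).add_const (a ^ 2)).sqrt hxa)
  refine (hs.mul (hasDerivAt_quadInvPrimitive hbc hbx hcx)).congr_deriv ?_
  have : √(x ^ 2 + a ^ 2) ≠ 0 := (sqrt_pos.2 (lt_of_le_of_ne (by positivity) hxa.symm)).ne'
  field_simp
  ring

lemma isBigO_sq_mul_deriv_sqrt_mul_quadInvPrimitive_sub (a : ℝ) {b c : ℝ} (hbc : b ≠ c) :
    (fun x => x ^ 2 * deriv (fun y => √(y ^ 2 + a ^ 2) * quadInvPrimitive b c y) x - (b + c) / 2)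
      =O[atTop] fun x => x⁻¹ := by
  have h₁ := (isBigO_sq_mul_div_sqrt_sq_add_sq_sub_one a).mul (isBigO_quadInvPrimitive hbc)
  have h₂ := isBigO_sq_mul_quadInvPrimitive_add hbc
  have hx2D : (fun x => x * (x * ((x - b) * (x - c))⁻¹)) =O[atTop] fun x => (x ^ 0)⁻¹ :=
    (isBigO_inv_mul_sub_mul_sub b c).id_mul_of_inv_pow_succ.id_mul_of_inv_pow_succ
  have h₃ := (isBigO_sqrt_sq_add_sq_sub_self a).mul hx2D
  have h₄ := isBigO_cube_mul_inv_mul_sub_mul_sub_sub b c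
  -- with `s = √(x² + a²)`, `g = quadInvPrimitive b c`, `D = ((x - b)(x - c))⁻¹` and
  -- `m = (b + c) / 2`, split `x² (x / s * g + s * D) - m` as
  -- `x² (x / s - 1) g + (x² g + x + m) + (s - x) x² D + (x³ D - x - (b + c))`
  refine (((h₁.congr_right fun x => by ring).add h₂).add
    (h₃.congr_right fun x => by ring)).add h₄ |>.congr' ?_ EventuallyEq.rfl
  filter_upwards [eventually_gt_atTop 0, eventually_gt_atTop b, eventually_gt_atTop c]
    with x hx hbx hcx
  rw [(hasDerivAt_sqrt_mul_quadInvPrimitive hbc hbx hcx (by positivity)).deriv]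
  ring

theorem ell0_time_inversion_asymptotics_general (M a : ℝ) (ha : |a| < M)
    (G : ℝ → ℝ) (hGs : HasCompactSupport G)
    (Q : ℝ) (hQ : Q = ∫ ρ in Set.Ioi (M + Real.sqrt (M ^ 2 - a ^ 2)), G ρ)
    (ψ : ℝ → ℝ)
    (hψ : ∀ ρ, M + Real.sqrt (M ^ 2 - a ^ 2) < ρ →
      ψ ρ = -∫ ρ₁ in Set.Ioi ρ, (ρ₁ ^ 2 - 2 * M * ρ₁ + a ^ 2)⁻¹ *
        ∫ ρ₂ in (M + Real.sqrt (M ^ 2 - a ^ 2))..ρ₁, G ρ₂) :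
    Tendsto (fun ρ => ρ * G ρ) atTop (nhds 0) ∧
    (∃ C R, ∀ ρ ≥ R,
      |Real.sqrt (ρ ^ 2 + a ^ 2) * ψ ρ - (-Q * (1 + M / ρ))| ≤ C / ρ ^ 2) ∧
    (∃ C R, ∀ ρ ≥ R,
      |ρ ^ 2 * deriv (fun s => Real.sqrt (s ^ 2 + a ^ 2) * ψ s) ρ - M * Q| ≤ C / ρ) ∧
    Tendsto (fun ρ => ρ ^ 2 * deriv (fun s => Real.sqrt (s ^ 2 + a ^ 2) * ψ s) ρ)
      atTop (nhds (M * Q)) := by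
  set σ := √(M ^ 2 - a ^ 2)
  have hMa : 0 < M ^ 2 - a ^ 2 := by nlinarith [sq_abs a, abs_nonneg a]
  have hσ : 0 < σ := sqrt_pos.2 hMa
  have hΔ (x : ℝ) : x ^ 2 - 2 * M * x + a ^ 2 = (x - (M + σ)) * (x - (M - σ)) := by
    linear_combination sq_sqrt hMa.le
  have hG := hGs.eventuallyEq_zero_atTop
  have hψQ : (fun x => √(x ^ 2 + a ^ 2) * ψ x) =ᶠ[atTop]
      fun x => Q * (√(x ^ 2 + a ^ 2) * quadInvPrimitive (M + σ) (M - σ) x) := by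
    filter_upwards [eventually_gt_atTop (M + σ),
      eventuallyEq_neg_integral_Ioi_inv_mul_sub_mul_sub_mul (b := M + σ) (c := M - σ)
        (by linarith) hG] with x hx hx'
    rw [hψ x hx]
    simp only [hΔ]
    rw [hx', hQ]
    ring
  have hroots : M + σ ≠ M - σ := by linarith
  have hsum : (M + σ + (M - σ)) / 2 = M := by ring
  have hF := (isBigO_sqrt_mul_quadInvPrimitive_add a hroots).const_mul_left Q
  have hdF := (isBigO_sq_mul_deriv_sqrt_mul_quadInvPrimitive_sub a hroots).const_mul_left Q
  rw [hsum] at hF hdF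
  have hdψ : (fun x => x ^ 2 * deriv (fun s => √(s ^ 2 + a ^ 2) * ψ s) x - M * Q)
      =O[atTop] fun x => x⁻¹ := by
    refine hdF.congr' ?_ EventuallyEq.rfl
    filter_upwards [hψQ.deriv_atTop] with x hx
    rw [hx, deriv_const_mul_field']
    ring
  refine ⟨tendsto_const_nhds.congr' ?_,
    exists_abs_le_div_pow_of_isBigO (hF.congr' ?_ EventuallyEq.rfl), ?_, ?_⟩
  · filter_upwards [hG] with x hx
    simp [hx]
  · filter_upwards [hψQ, eventually_ne_atTop 0] with x hx hx0
    rw [hx]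
    field_simp
    ring
  · simpa using exists_abs_le_div_pow_of_isBigO (n := 1) (by simpa using hdψ)
  · simpa using (hdψ.trans_tendsto tendsto_inv_atTop_zero).add_const (M * Q)

/-- **Large-`r` asymptotics of the time-inverted `ℓ = 0` mode.**
Let `Δ(ρ) = (ρ-r₊)(ρ-r₋) = ρ² - 2Mρ + a²`, let `G` be continuous and compactly
supported on `[r₊,∞)`, `Q = ∫_{r₊}^∞ G`, and
`ψ(ρ) = -∫_ρ^∞ Δ(ρ₁)⁻¹ ∫_{r₊}^{ρ₁} G(ρ₂) dρ₂ dρ₁`. Then as `ρ → ∞`: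
the limit term `lim ρ' G(ρ')` vanishes,
`√(ρ²+a²) ψ(ρ) = -Q(1 + M/ρ) + O(ρ⁻²)`,
`ρ² d/dρ(√(ρ²+a²) ψ)(ρ) = MQ + O(ρ⁻¹)`, and in particular
`lim_{ρ→∞} ρ² d/dρ(√(ρ²+a²) ψ) = MQ`. -/
theorem ell0_time_inversion_asymptotics (M a : ℝ) (hM : 0 < M) (ha : |a| < M)
    (G : ℝ → ℝ) (hGc : Continuous G) (hGs : HasCompactSupport G)
    (Q : ℝ) (hQ : Q = ∫ ρ in Set.Ioi (M + Real.sqrt (M ^ 2 - a ^ 2)), G ρ)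
    (ψ : ℝ → ℝ)
    (hψ : ∀ ρ, M + Real.sqrt (M ^ 2 - a ^ 2) < ρ →
      ψ ρ = -∫ ρ₁ in Set.Ioi ρ, (ρ₁ ^ 2 - 2 * M * ρ₁ + a ^ 2)⁻¹ *
        ∫ ρ₂ in (M + Real.sqrt (M ^ 2 - a ^ 2))..ρ₁, G ρ₂) :
    Tendsto (fun ρ => ρ * G ρ) atTop (nhds 0) ∧
    (∃ C R, ∀ ρ ≥ R,
      |Real.sqrt (ρ ^ 2 + a ^ 2) * ψ ρ - (-Q * (1 + M / ρ))| ≤ C / ρ ^ 2) ∧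
    (∃ C R, ∀ ρ ≥ R,
      |ρ ^ 2 * deriv (fun s => Real.sqrt (s ^ 2 + a ^ 2) * ψ s) ρ - M * Q| ≤ C / ρ) ∧
    Tendsto (fun ρ => ρ ^ 2 * deriv (fun s => Real.sqrt (s ^ 2 + a ^ 2) * ψ s) ρ)
      atTop (nhds (M * Q)) :=
  ell0_time_inversion_asymptotics_general M a ha G hGs Q hQ ψ hψ
end

section
/- Let $\ell \in \mathbb{N}$, $m \in \mathbb{R}$ with $-2 < m$, and let $u: [R_0, \infty) \to \mathbb{R}$ be smooth with suitable decay so that all boundary terms at infinity vanish. Define the 'descent' estimate: if $n \le \ell - 2$ and $u$ satisfies the pointwise bound $(X^n \psi)^2 \le C r^2 (X^{n+1}\psi)^2 + C r^4 (X^{n+2}\psi)^2 + (G_n)^2$ for functions $\psi, G_n$, then integrated bounds on all intermediate derivatives follow: $\sum_{l=0}^{\ell}\int_{R_0}^{\infty} r^{m+1-2l}(X^{\ell-l}\psi)^2\, dr \le C \sum_{l=0}^{\ell}\int_{R_0}^{\infty} r^{m+1-2l}(G_{\ell-l})^2\, dr + C\int_{R_0}^\infty r^{m+1}(X^\ell \psi)^2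 + r^{m-1}(X^{\ell-1}\psi)^2\,dr$, where $X = d/dr$. -/
open MeasureTheory

lemma elliptic_descent_aux (c0 : ℝ) (hc0 : 0 ≤ c0) (ℓ : ℕ) (A g : ℕ → ENNReal) (T : ENNReal)
    (h0 : A 0 ≤ T) (h1 : A 1 ≤ T)
    (hstep : ∀ n : ℕ, n + 2 ≤ ℓ →
      A (n + 2) ≤ ENNReal.ofReal c0 * A (n + 1) + ENNReal.ofReal c0 * A n + g (n + 2)) :
    ∑ l ∈ Finset.range (ℓ + 1), A l ≤
      ENNReal.ofReal (((ℓ : ℝ) + 1) * (2 * c0 + 1) ^ ℓ) * (∑ l ∈ Finset.range (ℓ + 1), g l)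
      + ENNReal.ofReal (((ℓ : ℝ) + 1) * (2 * c0 + 1) ^ ℓ) * T := by
  set K : ℝ := 2 * c0 + 1 with hKdef
  have hK1 : (1 : ℝ) ≤ K := by simp only [hKdef]; linarith
  set S : ENNReal := (∑ l ∈ Finset.range (ℓ + 1), g l) + T with hSdef
  have key : ∀ l, l ≤ ℓ → A l ≤ ENNReal.ofReal (K ^ l) * S := by
    intro l
    induction l using Nat.strong_induction_on with
    | _ l ih =>
      intro hl
      match l, ih with
      | 0, ih =>
        calc A 0 ≤ T := h0
          _ ≤ S := le_add_self
          _ = ENNReal.ofReal (K ^ 0) * S := by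
            rw [pow_zero, ENNReal.ofReal_one, one_mul]
      | 1, ih =>
        calc A 1 ≤ T := h1
          _ ≤ S := le_add_self
          _ ≤ ENNReal.ofReal (K ^ 1) * S := by
            refine le_mul_of_one_le_left zero_le ?_
            rw [pow_one]
            exact ENNReal.one_le_ofReal.mpr hK1
      | n + 2, ih =>
        have e1 := ih (n + 1) (by omega) (by omega)
        have e0 := ih n (by omega) (by omega)
        have hg : g (n + 2) ≤ S := by
          refine le_trans ?_ le_self_add
          exact Finset.single_le_sum (f := g) (fun i _ => zero_le)
            (Finset.mem_range.mpr (by omega))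
        have hpowle : K ^ n ≤ K ^ (n + 1) := pow_le_pow_right₀ hK1 (by omega)
        have honele : (1 : ℝ) ≤ K ^ (n + 1) := one_le_pow₀ hK1
        calc A (n + 2)
            ≤ ENNReal.ofReal c0 * A (n + 1) + ENNReal.ofReal c0 * A n + g (n + 2) :=
              hstep n hl
          _ ≤ ENNReal.ofReal c0 * (ENNReal.ofReal (K ^ (n + 1)) * S)
              + ENNReal.ofReal c0 * (ENNReal.ofReal (K ^ n) * S) + S := by
              gcongr
          _ = ENNReal.ofReal (c0 * K ^ (n + 1) + c0 * K ^ n + 1) * S := by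
              rw [ENNReal.ofReal_add (by positivity) (by norm_num),
                ENNReal.ofReal_add (by positivity) (by positivity),
                ENNReal.ofReal_mul hc0, ENNReal.ofReal_mul hc0, ENNReal.ofReal_one]
              ring
          _ ≤ ENNReal.ofReal (K ^ (n + 2)) * S := by
              refine mul_le_mul_left (ENNReal.ofReal_le_ofReal ?_) S
              have h3 : K ^ (n + 2) = K * K ^ (n + 1) := by ring
              nlinarith [hpowle, honele]
  calc ∑ l ∈ Finset.range (ℓ + 1), A l
      ≤ ∑ _l ∈ Finset.range (ℓ + 1), ENNReal.ofReal (K ^ ℓ) * S := by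
        refine Finset.sum_le_sum fun l hl => ?_
        have hl' : l ≤ ℓ := by
          have := Finset.mem_range.mp hl; omega
        refine le_trans (key l hl') (mul_le_mul_left (ENNReal.ofReal_le_ofReal ?_) S)
        exact pow_le_pow_right₀ hK1 hl'
    _ = ((ℓ + 1 : ℕ) : ENNReal) * (ENNReal.ofReal (K ^ ℓ) * S) := by
        rw [Finset.sum_const, Finset.card_range, nsmul_eq_mul]
    _ = ENNReal.ofReal (((ℓ : ℝ) + 1) * K ^ ℓ) * S := by
        rw [ENNReal.ofReal_mul (by positivity), ← mul_assoc]
        congr 1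
        rw [show ((ℓ : ℝ) + 1) = ((ℓ + 1 : ℕ) : ℝ) by push_cast; ring, ENNReal.ofReal_natCast]
    _ = ENNReal.ofReal (((ℓ : ℝ) + 1) * K ^ ℓ) * (∑ l ∈ Finset.range (ℓ + 1), g l)
        + ENNReal.ofReal (((ℓ : ℝ) + 1) * K ^ ℓ) * T := by
        rw [hSdef, mul_add]

/-- **Inductive descent step for the hierarchy of `r^{-2k}`-weighted elliptic
estimates.** Let `ℓ ≥ 1`, `m > -2`, `R₀ > 0`, `ψ` smooth, and suppose that for all
`n ≤ ℓ - 2` and `r ≥ R₀` the pointwise bound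
`(Xⁿψ)² ≤ C₀ r² (X^{n+1}ψ)² + C₀ r⁴ (X^{n+2}ψ)² + (Gₙ)²` holds (`X = d/dr`). Then
there is a constant `C` with
`∑_{l=0}^ℓ ∫_{R₀}^∞ r^{m+1-2l} (X^{ℓ-l}ψ)²
  ≤ C ∑_{l=0}^ℓ ∫_{R₀}^∞ r^{m+1-2l} (G_{ℓ-l})²
    + C ∫_{R₀}^∞ (r^{m+1} (X^ℓψ)² + r^{m-1} (X^{ℓ-1}ψ)²)`. -/
theorem elliptic_descent_estimate (ℓ : ℕ) (hℓ : 1 ≤ ℓ) (m R₀ C₀ : ℝ)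
    (hm : -2 < m) (hR₀ : 0 < R₀) (ψ : ℝ → ℝ) (hψ : ContDiff ℝ (⊤ : ℕ∞) ψ) (G : ℕ → ℝ → ℝ)
    (hpt : ∀ n : ℕ, (n : ℤ) ≤ (ℓ : ℤ) - 2 → ∀ r ≥ R₀,
      (iteratedDeriv n ψ r) ^ 2 ≤
        C₀ * r ^ 2 * (iteratedDeriv (n + 1) ψ r) ^ 2
        + C₀ * r ^ 4 * (iteratedDeriv (n + 2) ψ r) ^ 2 + (G n r) ^ 2) :
    ∃ C : ℝ, 0 < C ∧
      (∑ l ∈ Finset.range (ℓ + 1),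
          ∫⁻ r in Set.Ioi R₀,
            ENNReal.ofReal (r ^ (m + 1 - 2 * (l : ℝ)) * (iteratedDeriv (ℓ - l) ψ r) ^ 2))
        ≤ ENNReal.ofReal C *
            (∑ l ∈ Finset.range (ℓ + 1),
              ∫⁻ r in Set.Ioi R₀,
                ENNReal.ofReal (r ^ (m + 1 - 2 * (l : ℝ)) * (G (ℓ - l) r) ^ 2))
          + ENNReal.ofReal C *
            ∫⁻ r in Set.Ioi R₀,
              ENNReal.ofReal (r ^ (m + 1) * (iteratedDeriv ℓ ψ r) ^ 2
                + r ^ (m - 1) * (iteratedDeriv (ℓ - 1) ψ r) ^ 2) := by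
  have hc0 : (0 : ℝ) ≤ max C₀ 0 := le_max_right _ _
  refine ⟨((ℓ : ℝ) + 1) * (2 * max C₀ 0 + 1) ^ ℓ, by positivity, ?_⟩
  -- AEMeasurability of weighted derivative integrands on `Ioi R₀`
  have haem : ∀ (c : ℝ) (n : ℕ),
      AEMeasurable (fun r : ℝ => ENNReal.ofReal (r ^ c * (iteratedDeriv n ψ r) ^ 2))
        (volume.restrict (Set.Ioi R₀)) := by
    intro c n
    have h1 : ContinuousOn (fun r : ℝ => r ^ c * (iteratedDeriv n ψ r) ^ 2) (Set.Ioi R₀) := by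
      apply ContinuousOn.mul
      · exact fun x hx =>
          (Real.continuousAt_rpow_const x c (Or.inl (hR₀.trans hx).ne')).continuousWithinAt
      · exact ((hψ.continuous_iteratedDeriv n (by exact_mod_cast le_top)).pow 2).continuousOn
    exact (ENNReal.continuous_ofReal.comp_continuousOn h1).aemeasurable measurableSet_Ioi
  apply elliptic_descent_aux (max C₀ 0) hc0 ℓ
    (fun l => ∫⁻ r in Set.Ioi R₀,
      ENNReal.ofReal (r ^ (m + 1 - 2 * (l : ℝ)) * (iteratedDeriv (ℓ - l) ψ r) ^ 2))
    (fun l => ∫⁻ r in Set.Ioi R₀,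
      ENNReal.ofReal (r ^ (m + 1 - 2 * (l : ℝ)) * (G (ℓ - l) r) ^ 2))
  · -- A 0 ≤ T
    refine lintegral_mono_ae ?_
    filter_upwards [ae_restrict_mem measurableSet_Ioi] with r hr
    have hr0 : 0 < r := hR₀.trans hr
    apply ENNReal.ofReal_le_ofReal
    have : m + 1 - 2 * ((0 : ℕ) : ℝ) = m + 1 := by push_cast; ring
    rw [this, Nat.sub_zero]
    have : 0 ≤ r ^ (m - 1) * (iteratedDeriv (ℓ - 1) ψ r) ^ 2 := by positivity
    linarith
  · -- A 1 ≤ T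
    refine lintegral_mono_ae ?_
    filter_upwards [ae_restrict_mem measurableSet_Ioi] with r hr
    have hr0 : 0 < r := hR₀.trans hr
    apply ENNReal.ofReal_le_ofReal
    have : m + 1 - 2 * ((1 : ℕ) : ℝ) = m - 1 := by push_cast; ring
    rw [this]
    have : 0 ≤ r ^ (m + 1) * (iteratedDeriv ℓ ψ r) ^ 2 := by positivity
    linarith
  · -- descent step
    intro n hn
    have hj1 : ℓ - (n + 2) + 1 = ℓ - (n + 1) := by omega
    have hj2 : ℓ - (n + 2) + 2 = ℓ - n := by omega
    calc (∫⁻ r in Set.Ioi R₀,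
            ENNReal.ofReal (r ^ (m + 1 - 2 * ((n + 2 : ℕ) : ℝ))
              * (iteratedDeriv (ℓ - (n + 2)) ψ r) ^ 2))
        ≤ ∫⁻ r in Set.Ioi R₀,
            (ENNReal.ofReal (max C₀ 0) *
                ENNReal.ofReal (r ^ (m + 1 - 2 * ((n + 1 : ℕ) : ℝ))
                  * (iteratedDeriv (ℓ - (n + 1)) ψ r) ^ 2)
              + ENNReal.ofReal (max C₀ 0) *
                ENNReal.ofReal (r ^ (m + 1 - 2 * ((n : ℕ) : ℝ))
                  * (iteratedDeriv (ℓ - n) ψ r) ^ 2)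
              + ENNReal.ofReal (r ^ (m + 1 - 2 * ((n + 2 : ℕ) : ℝ))
                  * (G (ℓ - (n + 2)) r) ^ 2)) := by
          refine lintegral_mono_ae ?_
          filter_upwards [ae_restrict_mem measurableSet_Ioi] with r hr
          have hr0 : 0 < r := hR₀.trans hr
          have hb := hpt (ℓ - (n + 2)) (by push_cast [Nat.cast_sub (by omega : n + 2 ≤ ℓ)]; omega)
            r (le_of_lt hr)
          rw [hj1, hj2] at hb
          set e : ℝ := m + 1 - 2 * ((n + 2 : ℕ) : ℝ) with he
          have w2 : r ^ e * r ^ (2 : ℕ) = r ^ (m + 1 - 2 * ((n + 1 : ℕ) : ℝ)) := by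
            rw [← Real.rpow_natCast r 2, ← Real.rpow_add hr0]
            congr 1
            push_cast [he]; ring
          have w4 : r ^ e * r ^ (4 : ℕ) = r ^ (m + 1 - 2 * ((n : ℕ) : ℝ)) := by
            rw [← Real.rpow_natCast r 4, ← Real.rpow_add hr0]
            congr 1
            push_cast [he]; ring
          have hwe : 0 ≤ r ^ e := (Real.rpow_pos_of_pos hr0 e).le
          have hw2 : 0 ≤ r ^ (m + 1 - 2 * ((n + 1 : ℕ) : ℝ)) := (Real.rpow_pos_of_pos hr0 _).le
          have hw4 : 0 ≤ r ^ (m + 1 - 2 * ((n : ℕ) : ℝ)) := (Real.rpow_pos_of_pos hr0 _).le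
          have hreal : r ^ e * (iteratedDeriv (ℓ - (n + 2)) ψ r) ^ 2 ≤
              max C₀ 0 * (r ^ (m + 1 - 2 * ((n + 1 : ℕ) : ℝ)) * (iteratedDeriv (ℓ - (n + 1)) ψ r) ^ 2)
              + max C₀ 0 * (r ^ (m + 1 - 2 * ((n : ℕ) : ℝ)) * (iteratedDeriv (ℓ - n) ψ r) ^ 2)
              + r ^ e * (G (ℓ - (n + 2)) r) ^ 2 := by
            have hb' := mul_le_mul_of_nonneg_left hb hwe
            have hCm : C₀ ≤ max C₀ 0 := le_max_left _ _
            have hb2 : r ^ e * (iteratedDeriv (ℓ - (n + 2)) ψ r) ^ 2 ≤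
                C₀ * (r ^ (m + 1 - 2 * ((n + 1 : ℕ) : ℝ)) * (iteratedDeriv (ℓ - (n + 1)) ψ r) ^ 2)
                + C₀ * (r ^ (m + 1 - 2 * ((n : ℕ) : ℝ)) * (iteratedDeriv (ℓ - n) ψ r) ^ 2)
                + r ^ e * (G (ℓ - (n + 2)) r) ^ 2 := by
              calc r ^ e * (iteratedDeriv (ℓ - (n + 2)) ψ r) ^ 2 ≤ _ := hb'
                _ = C₀ * ((r ^ e * r ^ (2 : ℕ)) * (iteratedDeriv (ℓ - (n + 1)) ψ r) ^ 2)
                    + C₀ * ((r ^ e * r ^ (4 : ℕ)) * (iteratedDeriv (ℓ - n) ψ r) ^ 2)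
                    + r ^ e * (G (ℓ - (n + 2)) r) ^ 2 := by ring
                _ = _ := by rw [w2, w4]
            nlinarith [hb2,
              mul_nonneg (sub_nonneg.mpr hCm) (mul_nonneg hw2
                (sq_nonneg (iteratedDeriv (ℓ - (n + 1)) ψ r))),
              mul_nonneg (sub_nonneg.mpr hCm) (mul_nonneg hw4
                (sq_nonneg (iteratedDeriv (ℓ - n) ψ r)))]
          calc ENNReal.ofReal (r ^ e * (iteratedDeriv (ℓ - (n + 2)) ψ r) ^ 2)
              ≤ ENNReal.ofReal (max C₀ 0 * (r ^ (m + 1 - 2 * ((n + 1 : ℕ) : ℝ))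
                    * (iteratedDeriv (ℓ - (n + 1)) ψ r) ^ 2)
                  + max C₀ 0 * (r ^ (m + 1 - 2 * ((n : ℕ) : ℝ))
                    * (iteratedDeriv (ℓ - n) ψ r) ^ 2)
                  + r ^ e * (G (ℓ - (n + 2)) r) ^ 2) := ENNReal.ofReal_le_ofReal hreal
            _ ≤ _ := by
                refine le_trans (ENNReal.ofReal_add_le) ?_
                gcongr
                refine le_trans (ENNReal.ofReal_add_le) ?_
                rw [ENNReal.ofReal_mul hc0, ENNReal.ofReal_mul hc0]
      _ = ENNReal.ofReal (max C₀ 0) *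
            (∫⁻ r in Set.Ioi R₀,
              ENNReal.ofReal (r ^ (m + 1 - 2 * ((n + 1 : ℕ) : ℝ))
                * (iteratedDeriv (ℓ - (n + 1)) ψ r) ^ 2))
          + ENNReal.ofReal (max C₀ 0) *
            (∫⁻ r in Set.Ioi R₀,
              ENNReal.ofReal (r ^ (m + 1 - 2 * ((n : ℕ) : ℝ))
                * (iteratedDeriv (ℓ - n) ψ r) ^ 2))
          + ∫⁻ r in Set.Ioi R₀,
              ENNReal.ofReal (r ^ (m + 1 - 2 * ((n + 2 : ℕ) : ℝ)) * (G (ℓ - (n + 2)) r) ^ 2) := by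
          rw [lintegral_add_left' (f := fun r => ENNReal.ofReal (max C₀ 0) * ENNReal.ofReal (r ^ (m + 1 - 2 * ((n + 1 : ℕ) : ℝ)) * (iteratedDeriv (ℓ - (n + 1)) ψ r) ^ 2) + ENNReal.ofReal (max C₀ 0) * ENNReal.ofReal (r ^ (m + 1 - 2 * ((n : ℕ) : ℝ)) * (iteratedDeriv (ℓ - n) ψ r) ^ 2)) (((haem _ _).const_mul _).add ((haem _ _).const_mul _)),
            lintegral_add_left' ((haem _ _).const_mul _),
            lintegral_const_mul' _ _ ENNReal.ofReal_ne_top,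
            lintegral_const_mul' _ _ ENNReal.ofReal_ne_top]
end
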